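/- For every positive integer n, every c > 0, and every α ∈ (1 − 1/n, 1 + 1/n), the SIGTRON function s_{α,c} is n times continuously differentiable on all of ℝ; moreover, when α ≠ 1, its n-th derivative vanishes at every point outside dom(σ_{α,c}) (i.e., at every x > −c_α when α < 1, and at every x < −c_α when α > 1). -/

import Mathlib

/-- `c_α = c^{1−α}/(α−1)` (real power). -/
noncomputable def cA (α c : ℝ) : ℝ := c ^ (1 - α) / (α - 1)

/-- SIGTRON: extended asymmetric sigmoid with Perceptron. -/
noncomputable def sigtron (α c : ℝ) (x : ℝ) : ℝ :=
  if α = 1 then 1 / (1 + Real.exp (-x))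
  else if α < 1 then
    if x ≤ -(cA α c) then 1 / (1 + (1 + x / cA α c) ^ ((1 : ℝ) / (1 - α))) else 1
  else
    if -(cA α c) < x then 1 / (1 + (1 + x / cA α c) ^ ((1 : ℝ) / (1 - α))) else 0

/-!
On `dom(σ_{α,c})` SIGTRON is `1 / (1 + u ^ p)` with `p = 1 / (1 - α)` and `u = 1 + x / c_α` affine
in `x`; off it SIGTRON is constant. With the truncated power `u₊ ^ q = if 0 < u then u ^ q else 0`
both pieces become one formula: `1 / (1 + u₊ ^ q)` with `q = p` for `α < 1`, and
`u₊ ^ q / (1 + u₊ ^ q)` with `q = -p` for `α > 1`. Each derivative of `u₊ ^ q` lowers the exponent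
by one and the result stays continuous while the exponent is positive, so `u₊ ^ q` is `C^n` as soon
as `n < q`, which is exactly `|α - 1| < 1 / n`.
-/

open Real Filter Topology

noncomputable def truncPow (q x : ℝ) : ℝ := if 0 < x then x ^ q else 0

section truncPow

variable {q x : ℝ}

lemma truncPow_nonneg (q x : ℝ) : 0 ≤ truncPow q x := by
  unfold truncPow
  split_ifs with hx
  exacts [(rpow_pos_of_pos hx q).le, le_rfl]

lemma truncPow_of_pos (hx : 0 < x) : truncPow q x = x ^ q := if_pos hx

lemma truncPow_of_nonpos (hx : x ≤ 0) : truncPow q x = 0 := if_neg hx.not_gt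

lemma truncPow_of_nonneg (hq : q ≠ 0) (hx : 0 ≤ x) : truncPow q x = x ^ q := by
  rcases hx.eq_or_lt with rfl | hx
  · rw [truncPow_of_nonpos le_rfl, zero_rpow hq]
  · exact truncPow_of_pos hx

lemma truncPow_eq_max_rpow (hq : q ≠ 0) : truncPow q = fun x => max x 0 ^ q := by
  funext x
  rcases le_total x 0 with hx | hx
  · rw [truncPow_of_nonpos hx, max_eq_right hx, zero_rpow hq]
  · rw [truncPow_of_nonneg hq hx, max_eq_left hx]

lemma continuous_truncPow (hq : 0 < q) : Continuous (truncPow q) := by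
  rw [truncPow_eq_max_rpow hq.ne']
  exact (continuous_id.max continuous_const).rpow_const fun _ => Or.inr hq.le

lemma hasDerivAt_truncPow (hq : 1 < q) (x : ℝ) :
    HasDerivAt (truncPow q) (q * truncPow (q - 1) x) x := by
  rcases lt_trichotomy x 0 with hx | rfl | hx
  · have hzero : truncPow q =ᶠ[𝓝 x] fun _ => 0 := by
      filter_upwards [Iio_mem_nhds hx] with y hy using truncPow_of_nonpos hy.le
    rw [truncPow_of_nonpos hx.le, mul_zero]
    exact (hasDerivAt_const x 0).congr_of_eventuallyEq hzero
  · rw [truncPow_of_nonpos le_rfl, mul_zero, hasDerivAt_iff_tendsto_slope]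
    -- the difference quotient at `0` is `y₊ ^ q / y = y₊ ^ (q - 1)`, which tends to `0`
    have hslope : slope (truncPow q) 0 =ᶠ[𝓝[≠] 0] truncPow (q - 1) := by
      filter_upwards with y
      rw [slope_def_field, truncPow_of_nonpos le_rfl, sub_zero, sub_zero]
      rcases lt_or_ge 0 y with hy | hy
      · rw [truncPow_of_pos hy, truncPow_of_pos hy, rpow_sub hy, rpow_one]
      · rw [truncPow_of_nonpos hy, truncPow_of_nonpos hy, zero_div]
    have hcont := (continuous_truncPow (sub_pos.2 hq)).tendsto 0
    rw [truncPow_of_nonpos le_rfl] at hcont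
    exact (tendsto_congr' hslope).2 (hcont.mono_left nhdsWithin_le_nhds)
  · have hpow : truncPow q =ᶠ[𝓝 x] fun y => y ^ q := by
      filter_upwards [Ioi_mem_nhds hx] with y hy using truncPow_of_pos hy
    rw [truncPow_of_pos hx]
    exact (hasDerivAt_rpow_const (Or.inl hx.ne')).congr_of_eventuallyEq hpow

lemma contDiff_truncPow {n : ℕ} (hn : (n : ℝ) < q) : ContDiff ℝ (n : ℕ∞) (truncPow q) := by
  induction n generalizing q with
  | zero => exact contDiff_zero.2 (continuous_truncPow (by exact_mod_cast hn))
  | succ n ih =>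
    push_cast at hn
    have hq : 1 < q := by linarith [(n.cast_nonneg : (0 : ℝ) ≤ n)]
    have hderiv : deriv (truncPow q) = fun x => q * truncPow (q - 1) x :=
      funext fun x => (hasDerivAt_truncPow hq x).deriv
    have hsucc : ContDiff ℝ ((n : ℕ∞) + 1) (truncPow q) :=
      contDiff_succ_iff_deriv.2 ⟨fun x => (hasDerivAt_truncPow hq x).differentiableAt,
        fun h => by simp at h, hderiv ▸ contDiff_const.mul (ih (by linarith))⟩
    exact_mod_cast hsucc

end truncPow

lemma one_add_div_nonneg_iff_of_neg {a x : ℝ} (ha : a < 0) : 0 ≤ 1 + x / a ↔ x ≤ -a := by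
  rw [← neg_le_iff_add_nonneg', le_div_iff_of_neg ha, neg_one_mul]

lemma one_add_div_pos_iff_of_pos {a x : ℝ} (ha : 0 < a) : 0 < 1 + x / a ↔ -a < x := by
  rw [← neg_lt_iff_pos_add', lt_div_iff₀ ha, neg_one_mul]

lemma iteratedDeriv_eq_zero_of_eventuallyEq_const {n : ℕ} (hn : n ≠ 0) {f : ℝ → ℝ} {x b : ℝ}
    (hf : f =ᶠ[𝓝 x] fun _ => b) : iteratedDeriv n f x = 0 := by
  rw [hf.iteratedDeriv_eq, iteratedDeriv_const, if_neg hn]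

section sigtron

variable {α c : ℝ}

lemma cA_neg (hc : 0 < c) (hα : α < 1) : cA α c < 0 :=
  div_neg_of_pos_of_neg (rpow_pos_of_pos hc _) (sub_neg.2 hα)

lemma cA_pos (hc : 0 < c) (hα : 1 < α) : 0 < cA α c :=
  div_pos (rpow_pos_of_pos hc _) (sub_pos.2 hα)

lemma sigtron_one (c : ℝ) : sigtron 1 c = fun x => 1 / (1 + exp (-x)) := by
  funext x
  simp [sigtron]

lemma sigtron_of_lt_one (hc : 0 < c) (hα : α < 1) :
    sigtron α c = fun x => 1 / (1 + truncPow (1 / (1 - α)) (1 + x / cA α c)) := by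
  funext x
  have hu := one_add_div_nonneg_iff_of_neg (x := x) (cA_neg hc hα)
  simp only [sigtron, hα.ne, hα, if_false, if_true]
  split_ifs with hx
  · rw [truncPow_of_nonneg (one_div_ne_zero (sub_pos.2 hα).ne') (hu.2 hx)]
  · rw [truncPow_of_nonpos (not_le.1 (hx ∘ hu.1)).le, add_zero, div_one]

lemma sigtron_of_one_lt (hc : 0 < c) (hα : 1 < α) :
    sigtron α c = fun x => truncPow (1 / (α - 1)) (1 + x / cA α c) /
      (1 + truncPow (1 / (α - 1)) (1 + x / cA α c)) := by
  funext x
  have hu := one_add_div_pos_iff_of_pos (x := x) (cA_pos hc hα)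
  simp only [sigtron, hα.ne', hα.not_gt, if_false]
  split_ifs with hx
  · have hpos := hu.2 hx
    have hexp : (1 : ℝ) / (1 - α) = -(1 / (α - 1)) := by rw [← div_neg, neg_sub]
    rw [truncPow_of_pos hpos, hexp, rpow_neg hpos.le]
    field_simp
    ring
  · rw [truncPow_of_nonpos (not_lt.1 (hx ∘ hu.1)), zero_div]

lemma contDiff_sigtron_one (c : ℝ) : ContDiff ℝ ⊤ (sigtron 1 c) := by
  rw [sigtron_one]
  exact contDiff_const.div (contDiff_const.add (contDiff_exp.comp contDiff_neg))
    fun x => by positivity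

lemma contDiff_sigtron_of_lt_one {n : ℕ} (hc : 0 < c) (hα : α < 1) (hn : (n : ℝ) < 1 / (1 - α)) :
    ContDiff ℝ (n : ℕ∞) (sigtron α c) := by
  rw [sigtron_of_lt_one hc hα]
  have hu : ContDiff ℝ (n : ℕ∞) fun x => truncPow (1 / (1 - α)) (1 + x / cA α c) :=
    (contDiff_truncPow hn).comp (contDiff_const.add (contDiff_id.div_const _))
  exact contDiff_const.div (contDiff_const.add hu)
    fun x => by positivity [truncPow_nonneg (1 / (1 - α)) (1 + x / cA α c)]

lemma contDiff_sigtron_of_one_lt {n : ℕ} (hc : 0 < c) (hα : 1 < α) (hn : (n : ℝ) < 1 / (α - 1)) :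
    ContDiff ℝ (n : ℕ∞) (sigtron α c) := by
  rw [sigtron_of_one_lt hc hα]
  have hu : ContDiff ℝ (n : ℕ∞) fun x => truncPow (1 / (α - 1)) (1 + x / cA α c) :=
    (contDiff_truncPow hn).comp (contDiff_const.add (contDiff_id.div_const _))
  exact hu.div (contDiff_const.add hu)
    fun x => by positivity [truncPow_nonneg (1 / (α - 1)) (1 + x / cA α c)]

lemma sigtron_eventuallyEq_one {x : ℝ} (hα : α < 1) (hx : -cA α c < x) :
    sigtron α c =ᶠ[𝓝 x] fun _ => 1 := by
  filter_upwards [Ioi_mem_nhds hx] with y hy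
  simp [sigtron, hα.ne, hα, not_le.2 (Set.mem_Ioi.1 hy)]

lemma sigtron_eventuallyEq_zero {x : ℝ} (hα : 1 < α) (hx : x < -cA α c) :
    sigtron α c =ᶠ[𝓝 x] fun _ => 0 := by
  filter_upwards [Iio_mem_nhds hx] with y hy
  simp [sigtron, hα.ne', hα.not_gt, not_lt.2 (Set.mem_Iio.1 hy).le]

end sigtron

/-- For every positive integer `n`, `c > 0` and
`α ∈ (1 − 1/n, 1 + 1/n)`, SIGTRON is `n` times continuously differentiable on `ℝ`;
moreover when `α ≠ 1` its `n`-th derivative vanishes outside `dom(σ_{α,c})`, i.e.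
at every `x > −c_α` when `α < 1` and at every `x < −c_α` when `α > 1`. -/
theorem sigtron_stmt8 (n : ℕ) (hn : 1 ≤ n) (c : ℝ) (hc : 0 < c) (α : ℝ)
    (hα : α ∈ Set.Ioo (1 - 1 / (n : ℝ)) (1 + 1 / (n : ℝ))) :
    ContDiff ℝ (n : ℕ∞) (sigtron α c) ∧
    (α ≠ 1 →
      (α < 1 → ∀ x, -(cA α c) < x → iteratedDeriv n (sigtron α c) x = 0) ∧
      (1 < α → ∀ x, x < -(cA α c) → iteratedDeriv n (sigtron α c) x = 0)) := by
  have hn₀ : (0 : ℝ) < n := by exact_mod_cast hn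
  obtain ⟨hα₁, hα₂⟩ := hα
  refine ⟨?_, fun _ => ⟨fun hα x hx => ?_, fun hα x hx => ?_⟩⟩
  · rcases lt_trichotomy α 1 with hα | rfl | hα
    · exact contDiff_sigtron_of_lt_one hc hα ((lt_one_div (by linarith) hn₀).1 (by linarith))
    · exact (contDiff_sigtron_one c).of_le le_top
    · exact contDiff_sigtron_of_one_lt hc hα ((lt_one_div (by linarith) hn₀).1 (by linarith))
  · exact iteratedDeriv_eq_zero_of_eventuallyEq_const (by omega) (sigtron_eventuallyEq_one hα hx)
  · exact iteratedDeriv_eq_zero_of_eventuallyEq_const (by omega) (sigtron_eventuallyEq_zero hα hx)
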